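/- Let μ be a Borel probability measure on ℝ^p with M_d(μ) positive definite, and let x̄ ∈ ℝ^p. Then the Christoffel function identity holds: Q_{μ,d}(x̄)^{-1} = min over polynomials P of degree ≤ d with P(x̄) = 1 of ∫_{ℝ^p} P(x)^2 dμ(x), and the minimum is attained. -/

import Mathlib

/-! The integral `∫ P² dμ` of a polynomial with coefficient vector `c` is the quadratic form
`cᵀ M_d(μ) c`, and `P(x̄) = c ⬝ v_d(x̄)`, so the claim is the minimisation of a positive definite
quadratic form on the affine hyperplane `c ⬝ v = 1`. Its minimiser is `c* = (vᵀ M⁻¹ v)⁻¹ M⁻¹ v`,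
with value `(vᵀ M⁻¹ v)⁻¹`; for any feasible `c`, `cᵀ M c - (vᵀ M⁻¹ v)⁻¹ = (c - c*)ᵀ M (c - c*) ≥ 0`. -/

open MeasureTheory Finset Matrix

/-- Multi-indices in `p` variables of total degree at most `d`. -/
abbrev MIdx (p d : ℕ) := {α : Fin p → Fin (d + 1) // ∑ i, (α i : ℕ) ≤ d}

/-- The monomial `x ^ α`. -/
noncomputable def mon {p d : ℕ} (α : MIdx p d) (x : Fin p → ℝ) : ℝ :=
  ∏ i, x i ^ (α.1 i : ℕ)

/-- The moment matrix `M_d(μ)`, with entries `∫ x^(α+β) dμ`. -/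
noncomputable def momMat {p : ℕ} (d : ℕ) (μ : Measure (Fin p → ℝ)) :
    Matrix (MIdx p d) (MIdx p d) ℝ :=
  fun α β => ∫ x, mon α x * mon β x ∂μ

/-- Evaluation of the polynomial with coefficient vector `c` at `x`. -/
noncomputable def peval {p d : ℕ} (c : MIdx p d → ℝ) (x : Fin p → ℝ) : ℝ :=
  ∑ α, c α * mon α x

/-- The vector of monomials `v_d(x)`. -/
noncomputable def vvec {p : ℕ} (d : ℕ) (x : Fin p → ℝ) : MIdx p d → ℝ :=
  fun α => mon α x

/-- Graded lexicographic (strict) order: `glex α β` means `α <_gl β`. -/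
def glex {p d : ℕ} (α β : MIdx p d) : Prop :=
  (∑ i, (α.1 i : ℕ)) < (∑ i, (β.1 i : ℕ)) ∨
    ((∑ i, (α.1 i : ℕ)) = (∑ i, (β.1 i : ℕ)) ∧
      ∃ i, (∀ j, j < i → α.1 j = β.1 j) ∧ (β.1 i : ℕ) < (α.1 i : ℕ))

namespace Matrix

variable {ι : Type*} [Fintype ι] [DecidableEq ι] {M : Matrix ι ι ℝ}

theorem PosDef.isLeast_dotProduct_mulVec_of_dotProduct_eq_one (hM : M.PosDef) {v : ι → ℝ}
    (hv : v ≠ 0) :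
    IsLeast {t | ∃ c, c ⬝ᵥ v = 1 ∧ t = c ⬝ᵥ M *ᵥ c} (v ⬝ᵥ M⁻¹ *ᵥ v)⁻¹ := by
  set b := M⁻¹ *ᵥ v
  set Q := v ⬝ᵥ b
  have hMb : M *ᵥ b = v := by
    rw [mulVec_mulVec, mul_nonsing_inv _ hM.det_pos.ne'.isUnit, one_mulVec]
  have hQ : 0 < Q := by simpa using hM.inv.dotProduct_mulVec_pos hv
  have hbMb : b ⬝ᵥ M *ᵥ b = Q := by rw [hMb, dotProduct_comm]
  have hMt : Mᵀ = M := by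
    simpa [IsHermitian, conjTranspose_eq_transpose_of_trivial] using hM.isHermitian
  refine ⟨⟨Q⁻¹ • b, ?_, ?_⟩, ?_⟩
  · rw [smul_dotProduct, dotProduct_comm, smul_eq_mul, inv_mul_cancel₀ hQ.ne']
  · simp only [mulVec_smul, dotProduct_smul, smul_dotProduct, hbMb, smul_eq_mul]
    field_simp
  · rintro t ⟨c, hc, rfl⟩
    have hcMb : c ⬝ᵥ M *ᵥ b = 1 := by rw [hMb, hc]
    have hbMc : b ⬝ᵥ M *ᵥ c = 1 := by
      rw [dotProduct_mulVec, ← mulVec_transpose, hMt, dotProduct_comm, hcMb]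
    have hsq : (c - Q⁻¹ • b) ⬝ᵥ M *ᵥ (c - Q⁻¹ • b) = c ⬝ᵥ M *ᵥ c - Q⁻¹ := by
      simp only [mulVec_sub, mulVec_smul, sub_dotProduct, dotProduct_sub, smul_dotProduct,
        dotProduct_smul, smul_eq_mul, hcMb, hbMc, hbMb]
      field_simp
      ring
    have hnonneg := hM.posSemidef.dotProduct_mulVec_nonneg (c - Q⁻¹ • b)
    rw [star_trivial, hsq] at hnonneg
    linarith

end Matrix

section Moments

variable {p d : ℕ}

theorem peval_eq_dotProduct_vvec (c : MIdx p d → ℝ) (x : Fin p → ℝ) :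
    peval c x = c ⬝ᵥ vvec d x :=
  rfl

theorem vvec_ne_zero (x : Fin p → ℝ) : vvec d x ≠ 0 := by
  intro h
  have hconst : vvec d x ⟨fun _ => 0, by simp⟩ = 1 := by simp [vvec, mon]
  simp [h] at hconst

variable {μ : Measure (Fin p → ℝ)}

theorem integrable_mon_mul_mon
    (hmom : ∀ α : Fin p → ℕ, Integrable (fun x => ∏ i, x i ^ α i) μ) (α β : MIdx p d) :
    Integrable (fun x => mon α x * mon β x) μ := by
  simpa [mon, pow_add, prod_mul_distrib] using hmom fun i => (α.1 i : ℕ) + (β.1 i : ℕ)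

theorem integral_peval_sq
    (hmom : ∀ α : Fin p → ℕ, Integrable (fun x => ∏ i, x i ^ α i) μ) (c : MIdx p d → ℝ) :
    ∫ x, peval c x ^ 2 ∂μ = c ⬝ᵥ momMat d μ *ᵥ c := by
  have hint : ∀ α β, Integrable (fun x => c α * (mon α x * mon β x) * c β) μ :=
    fun α β => ((integrable_mon_mul_mon hmom α β).const_mul _).mul_const _
  calc ∫ x, peval c x ^ 2 ∂μ
      = ∫ x, ∑ α, ∑ β, c α * (mon α x * mon β x) * c β ∂μ := by
        congr with x
        simp only [peval, sq, sum_mul_sum]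
        exact sum_congr rfl fun α _ => sum_congr rfl fun β _ => by ring
    _ = ∑ α, ∑ β, c α * momMat d μ α β * c β := by
        rw [integral_finsetSum _ fun α _ => integrable_finsetSum _ fun β _ => hint α β]
        refine sum_congr rfl fun α _ => ?_
        rw [integral_finsetSum _ fun β _ => hint α β]
        refine sum_congr rfl fun β _ => ?_
        rw [integral_mul_const, integral_const_mul]
        rfl
    _ = c ⬝ᵥ momMat d μ *ᵥ c := by
        simp only [dotProduct, mulVec, mul_sum, mul_assoc]

end Moments

theorem christoffel_function_eq_min_general {p d : ℕ} (μ : Measure (Fin p → ℝ))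
    (hmom : ∀ α : Fin p → ℕ, Integrable (fun x => ∏ i, x i ^ α i) μ)
    (hpd : (momMat d μ).PosDef) (xbar : Fin p → ℝ) :
    IsLeast {t : ℝ | ∃ c : MIdx p d → ℝ, peval c xbar = 1 ∧ t = ∫ x, (peval c x) ^ 2 ∂μ}
      (vvec d xbar ⬝ᵥ (momMat d μ)⁻¹ *ᵥ vvec d xbar)⁻¹ := by
  simp_rw [integral_peval_sq hmom, peval_eq_dotProduct_vvec]
  exact hpd.isLeast_dotProduct_mulVec_of_dotProduct_eq_one (vvec_ne_zero xbar)

/-- the Christoffel function identity: `Q_{μ,d}(x̄)⁻¹` is the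
minimum of `∫ P² dμ` over polynomials of degree ≤ d with `P(x̄) = 1`,
and the minimum is attained. -/
theorem christoffel_function_eq_min {p d : ℕ} (μ : Measure (Fin p → ℝ))
    [IsProbabilityMeasure μ]
    (hmom : ∀ α : Fin p → ℕ, Integrable (fun x => ∏ i, x i ^ α i) μ)
    (hpd : (momMat d μ).PosDef) (xbar : Fin p → ℝ) :
    IsLeast {t : ℝ | ∃ c : MIdx p d → ℝ, peval c xbar = 1 ∧ t = ∫ x, (peval c x) ^ 2 ∂μ}
      (vvec d xbar ⬝ᵥ (momMat d μ)⁻¹ *ᵥ vvec d xbar)⁻¹ :=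
  christoffel_function_eq_min_general μ hmom hpd xbar
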